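/- arXiv:0704.2931 — 2 statements merged into one kernel-verified Lean document; each statement's English description precedes it below -/
import Mathlib

section
/- Let n be a finite type with decidable equality, A, B : Matrix n n ℝ with A positive definite and B symmetric. Set M := X • A.map C − B.map C : Matrix n n ℝ[X], let s₀ : ℝ, and let μ := (M.det).rootMultiplicity s₀. Then for all indices i j, the polynomial (X − C s₀)^(μ − 1) divides (Matrix.adjugate M) i j. (Weierstrass's 'remarkable circumstance' of 1858: for a definite pencil, a root of multiplicity μ of the determinant is a root of multiplicity at least μ − 1 of every first minor; in particular the classical eigenvector formulas never take the form 0/0.) -/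
/-!
A definite pencil is congruent to a diagonal one: `A = V Vᵀ` and `B = V diag(e) Vᵀ` with
`V` invertible, so `M = V D Vᵀ` with `D = diag(X - e_k)`. Then `det M = det(V)² ∏ (X - e_k)`,
so `μ` is the number of `k` with `e_k = s₀`, and `adj M = adj Vᵀ · adj D · adj V`. The only
nonzero entries of `adj D` are the products `∏_{l ≠ k} (X - e_l)`, each of which keeps at
least `μ - 1` of the `μ` factors `X - s₀`.
-/

open Polynomial Matrix
open scoped ComplexOrder

theorem Polynomial.rootMultiplicity_prod_X_sub_C {ι R : Type*} [CommRing R] [IsDomain R]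
    [DecidableEq R] (s : Finset ι) (e : ι → R) (a : R) :
    (∏ k ∈ s, (X - C (e k))).rootMultiplicity a = (s.filter (fun k => e k = a)).card := by
  have hprod : ∏ k ∈ s, (X - C (e k)) = ((s.val.map e).map fun a => X - C a).prod := by
    rw [Multiset.map_map]; rfl
  rw [← count_roots, hprod, roots_multiset_prod_X_sub_C, Multiset.count_map]
  simp [Finset.card_def, eq_comm]

namespace Matrix

section SimultaneousDiagonalization

variable {n 𝕜 : Type*} [Fintype n] [DecidableEq n] [RCLike 𝕜]

theorem PosDef.exists_isUnit_det_eq_mul_conjTranspose {A : Matrix n n 𝕜} (hA : A.PosDef) :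
    ∃ W : Matrix n n 𝕜, IsUnit W.det ∧ A = W * Wᴴ := by
  open scoped MatrixOrder in
  obtain ⟨Q, rfl⟩ := CStarAlgebra.nonneg_iff_eq_star_mul_self.mp hA.posSemidef.nonneg
  rw [star_eq_conjTranspose] at hA ⊢
  refine ⟨Qᴴ, ?_, by rw [conjTranspose_conjTranspose]⟩
  have hdet := (isUnit_iff_isUnit_det _).mp hA.isUnit
  rw [det_mul] at hdet
  exact isUnit_of_mul_isUnit_left hdet

/-- `V = W U`, where `A = W Wᴴ` and the unitary `U` diagonalizes the Hermitian matrix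
`W⁻¹ B W⁻ᴴ`. -/
theorem PosDef.exists_simultaneous_diagonalization {A B : Matrix n n 𝕜} (hA : A.PosDef)
    (hB : B.IsHermitian) :
    ∃ (V : Matrix n n 𝕜) (e : n → ℝ),
      A = V * Vᴴ ∧ B = V * diagonal (fun k => (e k : 𝕜)) * Vᴴ := by
  obtain ⟨W, hW, rfl⟩ := hA.exists_isUnit_det_eq_mul_conjTranspose
  have hS : (W⁻¹ * B * W⁻¹ᴴ).IsHermitian := by
    simpa [mul_assoc] using isHermitian_mul_mul_conjTranspose W⁻¹ hB
  set U : Matrix n n 𝕜 := (hS.eigenvectorUnitary : Matrix n n 𝕜)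
  have hU : U * Uᴴ = 1 := Unitary.mul_star_self_of_mem hS.eigenvectorUnitary.2
  refine ⟨W * U, hS.eigenvalues, ?_, ?_⟩
  · rw [conjTranspose_mul, mul_assoc, ← mul_assoc U, hU, one_mul]
  · calc B = (W * W⁻¹) * B * (W⁻¹ᴴ * Wᴴ) := by
          rw [← conjTranspose_mul, mul_nonsing_inv _ hW, conjTranspose_one, one_mul, mul_one]
      _ = W * (W⁻¹ * B * W⁻¹ᴴ) * Wᴴ := by simp only [mul_assoc]
      _ = W * (U * diagonal (RCLike.ofReal ∘ hS.eigenvalues) * Uᴴ) * Wᴴ :=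
          congrArg (W * · * Wᴴ) hS.spectral_theorem
      _ = _ := by simp only [conjTranspose_mul, Function.comp_def, mul_assoc]

end SimultaneousDiagonalization

section Pencil

variable {n R : Type*} [Fintype n] [CommRing R]

theorem dvd_mul_mul_apply {L N M : Matrix n n R} {c : R} (hN : ∀ i j, c ∣ N i j) (i j : n) :
    c ∣ (L * N * M) i j := by
  simp only [mul_apply]
  exact Finset.dvd_sum fun k _ =>
    dvd_mul_of_dvd_left (Finset.dvd_sum fun l _ => dvd_mul_of_dvd_right (hN l k) _) _

variable [DecidableEq n]

theorem pow_dvd_adjugate_diagonal_apply {d : n → R} {p : R} {s : Finset n}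
    (hs : ∀ k ∈ s, p ∣ d k) (i j : n) : p ^ (s.card - 1) ∣ adjugate (diagonal d) i j := by
  rw [adjugate_diagonal]
  rcases eq_or_ne i j with rfl | hij
  · rw [diagonal_apply_eq]
    calc p ^ (s.card - 1) ∣ p ^ (s.erase i).card :=
          pow_dvd_pow _ Finset.pred_card_le_card_erase
      _ = ∏ _ ∈ s.erase i, p := (Finset.prod_const p).symm
      _ ∣ ∏ k ∈ s.erase i, d k :=
          Finset.prod_dvd_prod_of_dvd _ _ fun k hk => hs k (Finset.mem_of_mem_erase hk)
      _ ∣ ∏ k ∈ Finset.univ.erase i, d k :=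
          Finset.prod_dvd_prod_of_subset _ _ _ (Finset.erase_subset_erase i s.subset_univ)
  · rw [diagonal_apply_ne _ hij]
    exact dvd_zero _

noncomputable def pencil (A B : Matrix n n R) : Matrix n n R[X] := (X : R[X]) • A.map C - B.map C

theorem pencil_mul_transpose (V : Matrix n n R) (e : n → R) :
    pencil (V * Vᵀ) (V * diagonal e * Vᵀ) =
      V.map C * diagonal (fun k => X - C (e k)) * (V.map C)ᵀ := by
  have hD : diagonal (fun k => X - C (e k)) =
      (X : R[X]) • (1 : Matrix n n R[X]) - (diagonal e).map C := by
    rw [smul_one_eq_diagonal, diagonal_map (map_zero C), diagonal_sub]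
  rw [pencil, hD, mul_sub, sub_mul, mul_smul_comm, mul_one, smul_mul_assoc, ← transpose_map]
  simp only [Matrix.map_mul]

theorem rootMultiplicity_det_pencil_mul_transpose [IsDomain R] [DecidableEq R]
    {V : Matrix n n R} (hV : V.det ≠ 0) (e : n → R) (a : R) :
    (pencil (V * Vᵀ) (V * diagonal e * Vᵀ)).det.rootMultiplicity a =
      (Finset.univ.filter (fun k => e k = a)).card := by
  have hdet : (pencil (V * Vᵀ) (V * diagonal e * Vᵀ)).det =
      C (V.det ^ 2) * ∏ k, (X - C (e k)) := by
    rw [pencil_mul_transpose, det_mul, det_mul, det_transpose, det_diagonal,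
      ← RingHom.mapMatrix_apply, ← RingHom.map_det, C_pow]
    ring
  have hprod : ∏ k, (X - C (e k)) ≠ 0 :=
    Finset.prod_ne_zero_iff.mpr fun k _ => X_sub_C_ne_zero (e k)
  rw [hdet, rootMultiplicity_mul (mul_ne_zero (C_ne_zero.mpr (pow_ne_zero 2 hV)) hprod),
    rootMultiplicity_C, zero_add, rootMultiplicity_prod_X_sub_C]

end Pencil

end Matrix

theorem weierstrass_remarkable_circumstance
    {n : Type*} [Fintype n] [DecidableEq n]
    (A B : Matrix n n ℝ) (hA : A.PosDef) (hB : B.IsSymm) (s₀ : ℝ) :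
    ∀ i j : n,
      (X - C s₀) ^ ((Matrix.det ((X : ℝ[X]) • A.map C - B.map C)).rootMultiplicity s₀ - 1) ∣
        (Matrix.adjugate ((X : ℝ[X]) • A.map C - B.map C)) i j := by
  intro i j
  obtain ⟨V, e, rfl, rfl⟩ :=
    hA.exists_simultaneous_diagonalization (isHermitian_iff_isSymm.mpr hB)
  simp only [conjTranspose_eq_transpose_of_trivial, RCLike.ofReal_real_eq_id, id] at hA ⊢
  have hV : V.det ≠ 0 := fun h => hA.det_pos.ne' (by rw [det_mul, h, zero_mul])
  change (X - C s₀) ^ ((pencil _ _).det.rootMultiplicity s₀ - 1) ∣ adjugate (pencil _ _) i j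
  rw [rootMultiplicity_det_pencil_mul_transpose hV, pencil_mul_transpose, adjugate_mul_distrib,
    adjugate_mul_distrib, ← Matrix.mul_assoc]
  refine dvd_mul_mul_apply (pow_dvd_adjugate_diagonal_apply fun k hk => ?_) i j
  rw [(Finset.mem_filter.mp hk).2]
end

section
/- Let n be a finite type with decidable equality, let A, A' : Matrix n n ℝ be positive definite and B, B' : Matrix n n ℝ be symmetric. Then the pairs are simultaneously congruent — i.e., there exists an invertible P : Matrix n n ℝ with Pᵀ * A * P = A' and Pᵀ * B * P = B' — if and only if there exists a real constant c > 0 such that det(X • A'.map C − B'.map C) = C c * det(X • A.map C − B.map C) in ℝ[X]. (Weierstrass–Kronecker: for definite pencils, the roots of the pencil determinant, with multiplicities, form a complete system of invariants for simultaneous congruence.) -/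
/-!
Replacing `(A, B)` by `(Pᵀ A P, Pᵀ B P)` multiplies the pencil polynomial by `(det P)²`. A positive
definite `A` is congruent to `1` (via `P = A^{-1/2}`), and the pencil polynomial of `(1, S)` is the
characteristic polynomial of `S`. Characteristic polynomials are monic, so the hypothesis forces
`charpoly S = charpoly S'`; then the symmetric matrices `S` and `S'` have the same eigenvalues and,
by the spectral theorem, are orthogonally congruent to the same diagonal matrix.
-/

open Polynomial Matrix

namespace Matrix

variable {n R : Type*} [Fintype n] [CommRing R]

theorem IsSymm.transpose_mul_mul {B : Matrix n n R} (hB : B.IsSymm) (P : Matrix n n R) :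
    (Pᵀ * B * P).IsSymm := by
  simp [IsSymm, transpose_mul, hB.eq, Matrix.mul_assoc]

variable [DecidableEq n]

noncomputable def pencilPoly (A B : Matrix n n R) : R[X] :=
  det ((X : R[X]) • A.map C - B.map C)

def SimulCongruent (A B A' B' : Matrix n n R) : Prop :=
  ∃ P : Matrix n n R, IsUnit P.det ∧ Pᵀ * A * P = A' ∧ Pᵀ * B * P = B'

theorem pencilPoly_one (S : Matrix n n R) : pencilPoly 1 S = S.charpoly := by
  simp [pencilPoly, charpoly, charmatrix, Matrix.map_one, smul_one_eq_diagonal,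
    Matrix.scalar_apply]

theorem pencilPoly_transpose_mul_mul (P A B : Matrix n n R) :
    pencilPoly (Pᵀ * A * P) (Pᵀ * B * P) = C (P.det ^ 2) * pencilPoly A B := by
  have hmap : (X : R[X]) • (Pᵀ * A * P).map C - (Pᵀ * B * P).map C =
      (P.map C)ᵀ * ((X : R[X]) • A.map C - B.map C) * P.map C := by
    simp only [Matrix.map_mul, transpose_map, Matrix.mul_sub, Matrix.sub_mul, Matrix.mul_smul,
      Matrix.smul_mul]
  rw [pencilPoly, pencilPoly, hmap, det_mul, det_mul, det_transpose, ← RingHom.mapMatrix_apply,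
    ← RingHom.map_det, map_pow]
  ring

namespace SimulCongruent

variable {A B A' B' A'' B'' : Matrix n n R}

theorem symm (h : SimulCongruent A B A' B') : SimulCongruent A' B' A B := by
  obtain ⟨P, hP, rfl, rfl⟩ := h
  have hcancel (M : Matrix n n R) : P⁻¹ᵀ * (Pᵀ * M * P) * P⁻¹ = M := by
    rw [Matrix.mul_assoc, Matrix.mul_assoc, mul_nonsing_inv _ hP, Matrix.mul_one,
      ← Matrix.mul_assoc, ← transpose_mul, mul_nonsing_inv _ hP, transpose_one, Matrix.one_mul]
  exact ⟨P⁻¹, isUnit_nonsing_inv_det P hP, hcancel A, hcancel B⟩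

theorem trans (h : SimulCongruent A B A' B') (h' : SimulCongruent A' B' A'' B'') :
    SimulCongruent A B A'' B'' := by
  obtain ⟨P, hP, rfl, rfl⟩ := h
  obtain ⟨Q, hQ, rfl, rfl⟩ := h'
  refine ⟨P * Q, by simpa [det_mul] using hP.mul hQ, ?_, ?_⟩ <;>
    simp only [transpose_mul, Matrix.mul_assoc]

theorem associated_pencilPoly (h : SimulCongruent A B A' B') :
    Associated (pencilPoly A B) (pencilPoly A' B') := by
  obtain ⟨P, hP, rfl, rfl⟩ := h
  rw [pencilPoly_transpose_mul_mul]
  exact associated_unit_mul_right _ _ ((hP.pow 2).map C)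

end SimulCongruent

theorem IsSymm.simulCongruent_one_diagonal_eigenvalues {S : Matrix n n ℝ} (hS : S.IsSymm) :
    SimulCongruent 1 S 1 (diagonal (isHermitian_iff_isSymm.2 hS).eigenvalues) := by
  set hH := isHermitian_iff_isSymm.2 hS
  set U : Matrix n n ℝ := (hH.eigenvectorUnitary : Matrix n n ℝ)
  have hU : Uᵀ * U = 1 := by
    simpa [U, star_eq_conjTranspose] using Unitary.coe_star_mul_self hH.eigenvectorUnitary
  refine ⟨U, isUnit_det_of_left_inverse hU, by rw [Matrix.mul_one, hU], ?_⟩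
  simpa [U, Unitary.conjStarAlgAut_star_apply, star_eq_conjTranspose] using
    hH.conjStarAlgAut_star_eigenvectorUnitary

theorem IsSymm.simulCongruent_one_of_charpoly_eq {S S' : Matrix n n ℝ} (hS : S.IsSymm)
    (hS' : S'.IsSymm) (h : S.charpoly = S'.charpoly) : SimulCongruent 1 S 1 S' := by
  have heig := ((isHermitian_iff_isSymm.2 hS).eigenvalues_eq_eigenvalues_iff
    (isHermitian_iff_isSymm.2 hS')).2 h
  exact hS.simulCongruent_one_diagonal_eigenvalues.trans
    (heig ▸ hS'.simulCongruent_one_diagonal_eigenvalues.symm)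

open scoped MatrixOrder in
theorem PosDef.exists_transpose_mul_mul_eq_one {A : Matrix n n ℝ} (hA : A.PosDef) :
    ∃ P : Matrix n n ℝ, IsUnit P.det ∧ Pᵀ * A * P = 1 := by
  set R := CFC.sqrt A
  have hRR : R * R = A := CFC.sqrt_mul_sqrt_self A hA.posSemidef.nonneg
  have hRT : Rᵀ = R := by
    simpa using (CFC.sqrt_nonneg A).posSemidef.isHermitian.eq
  have hR : IsUnit R.det := by
    refine isUnit_iff_ne_zero.2 fun h => hA.det_pos.ne' ?_
    rw [← hRR, det_mul, h, zero_mul]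
  refine ⟨R⁻¹, isUnit_nonsing_inv_det R hR, ?_⟩
  rw [transpose_nonsing_inv, hRT, ← hRR, Matrix.mul_assoc, Matrix.mul_assoc,
    mul_nonsing_inv _ hR, Matrix.mul_one, nonsing_inv_mul _ hR]

theorem PosDef.exists_simulCongruent_one {A B : Matrix n n ℝ} (hA : A.PosDef) (hB : B.IsSymm) :
    ∃ S : Matrix n n ℝ, S.IsSymm ∧ SimulCongruent A B 1 S := by
  obtain ⟨P, hP, hPA⟩ := hA.exists_transpose_mul_mul_eq_one
  exact ⟨Pᵀ * B * P, hB.transpose_mul_mul P, P, hP, hPA, rfl⟩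

end Matrix

theorem definite_pencil_congruence_iff_pencil_polynomial
    {n : Type*} [Fintype n] [DecidableEq n]
    (A A' B B' : Matrix n n ℝ)
    (hA : A.PosDef) (hA' : A'.PosDef) (hB : B.IsSymm) (hB' : B'.IsSymm) :
    (∃ P : Matrix n n ℝ, IsUnit P.det ∧ Pᵀ * A * P = A' ∧ Pᵀ * B * P = B') ↔
    (∃ c : ℝ, 0 < c ∧
      Matrix.det ((X : ℝ[X]) • A'.map C - B'.map C) =
        C c * Matrix.det ((X : ℝ[X]) • A.map C - B.map C)) := by
  show SimulCongruent A B A' B' ↔ ∃ c : ℝ, 0 < c ∧ pencilPoly A' B' = C c * pencilPoly A B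
  constructor
  · rintro ⟨P, hP, rfl, rfl⟩
    exact ⟨P.det ^ 2, pow_two_pos_of_ne_zero hP.ne_zero, pencilPoly_transpose_mul_mul P A B⟩
  · rintro ⟨c, hc, hpencil⟩
    obtain ⟨S, hS, hABS⟩ := hA.exists_simulCongruent_one hB
    obtain ⟨S', hS', hABS'⟩ := hA'.exists_simulCongruent_one hB'
    have hassoc : Associated (pencilPoly A B) (pencilPoly A' B') := by
      rw [hpencil]
      exact associated_unit_mul_right _ _ (isUnit_C.2 hc.ne'.isUnit)
    have hcharpoly : S.charpoly = S'.charpoly := by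
      refine eq_of_monic_of_associated S.charpoly_monic S'.charpoly_monic ?_
      rw [← pencilPoly_one, ← pencilPoly_one]
      exact hABS.associated_pencilPoly.symm.trans (hassoc.trans hABS'.associated_pencilPoly)
    exact (hABS.trans (hS.simulCongruent_one_of_charpoly_eq hS' hcharpoly)).trans hABS'.symm
end
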